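/- arXiv:1206.3131 — 3 statements merged into one kernel-verified Lean document; each statement's English description precedes it below -/
import Mathlib

section
/- Let λ = (λ_1 ≥ ⋯ ≥ λ_N ≥ 0) be a partition with at most N parts and let T be a column-strict tableau of shape λ with entries in {1,…,N}, with associated weight matrix θ = (θ_{i,k}) ∈ Pol_λ. Then the specialization z_i = 𝔱^{N−i} q^{λ_i} (1 ≤ i ≤ N) in c_N is well defined (no denominator factor vanishes) and c_N(θ; 𝔱^{N−1}q^{λ_1}, 𝔱^{N−2}q^{λ_2},…, q^{λ_N}; q,𝔱) = ψ_T(q,𝔱) as elements of the rational function field ℚ(q,𝔱). -/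
/-!
At `z_i = 𝔱^{N-i} q^{λ_i}` every ratio `z_j / z_i` is the Laurent monomial `q^{λ_j-λ_i} 𝔱^{i-j}`,
and since `θ` is the weight matrix of `T` the sums `S_{i,j,k}` telescope to
`(λ_i - λ^{(k)}_i) - (λ_j - λ^{(k)}_j)`. Substituting, the four q-Pochhammer arguments of the
`(k,i,j)` factor of `c_N` become exactly those of the `(k,i,j)` factor of `ψ_T` (the two fractions
in swapped order), and the `k = 1` factor of `ψ_T` is an empty product.

A monomial `q^a 𝔱^b` equals `1` only for `a = b = 0`. In the denominators the `𝔱`-exponent is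
`i - j - 1` resp. `i - j`, which is nonzero except in the second one for `i = j`; there the
`q`-exponents run through `-θ_{i,k}, …, -1`.
-/

noncomputable section
open Finset

/-- The q-Pochhammer symbol `(a;q)_n`. -/
def qPoch {K : Type*} [CommRing K] (a q : K) (n : ℕ) : K :=
  ∏ k ∈ Finset.range n, (1 - a * q ^ k)

/-- `S_{i,j,k} = Σ_{a=k+1}^N (θ_{i,a} − θ_{j,a})`. -/
def Sijk (N : ℕ) (θ : ℕ → ℕ → ℕ) (i j k : ℕ) : ℤ :=
  ∑ a ∈ Finset.Icc (k+1) N, ((θ i a : ℤ) - (θ j a : ℤ))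

/-- The coefficient `c_N(θ; z₁,…,z_N; q,𝔱)`. -/
def cfun {K : Type*} [Field K] (N : ℕ) (θ : ℕ → ℕ → ℕ) (q t : K) (z : ℕ → K) : K :=
  ∏ k ∈ Finset.Icc 2 N, ∏ i ∈ Finset.Icc 1 (k-1), ∏ j ∈ Finset.Icc i (k-1),
    ((qPoch (q ^ (Sijk N θ i (j+1) k) * t * z (j+1) / z i) q (θ i k) /
      qPoch (q ^ (Sijk N θ i (j+1) k) * q * z (j+1) / z i) q (θ i k)) *
     (qPoch (q ^ (-(θ j k : ℤ) + Sijk N θ i j k) * (q / t) * z j / z i) q (θ i k) /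
      qPoch (q ^ (-(θ j k : ℤ) + Sijk N θ i j k) * z j / z i) q (θ i k)))

/-- `Λ` encodes a column-strict tableau of shape `lam`. -/
def IsTab (N : ℕ) (lam : ℕ → ℕ) (Λ : ℕ → ℕ → ℕ) : Prop :=
  (∀ k i, ¬(1 ≤ i ∧ i ≤ k ∧ k ≤ N) → Λ k i = 0) ∧
  (∀ i, 1 ≤ i → Λ N i = lam i) ∧
  (∀ k, 1 ≤ k → k ≤ N → ∀ i, 1 ≤ i → Λ (k-1) i ≤ Λ k i ∧ Λ k (i+1) ≤ Λ (k-1) i)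

/-- the weight matrix of a chain. -/
def thetaOf (Λ : ℕ → ℕ → ℕ) : ℕ → ℕ → ℕ := fun i j => Λ j i - Λ (j-1) i

/-- Macdonald's tableau coefficient `ψ_T(q,𝔱)`, in closed q-Pochhammer form. -/
def psiT (N : ℕ) {K : Type*} [Field K] (Λ : ℕ → ℕ → ℕ) (q t : K) : K :=
  ∏ k ∈ Finset.Icc 1 N, ∏ i ∈ Finset.Icc 1 (k-1), ∏ j ∈ Finset.Icc i (k-1),
    (qPoch (q ^ (-(Λ k i : ℤ) + (Λ (k-1) j : ℤ) + 1) * t ^ ((i:ℤ) - (j:ℤ) - 1)) q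
        (Λ k i - Λ (k-1) i) /
     qPoch (q ^ (-(Λ k i : ℤ) + (Λ (k-1) j : ℤ)) * t ^ ((i:ℤ) - (j:ℤ))) q
        (Λ k i - Λ (k-1) i)) *
    (qPoch (q ^ (-(Λ k i : ℤ) + (Λ k (j+1) : ℤ)) * t ^ ((i:ℤ) - (j:ℤ))) q
        (Λ k i - Λ (k-1) i) /
     qPoch (q ^ (-(Λ k i : ℤ) + (Λ k (j+1) : ℤ) + 1) * t ^ ((i:ℤ) - (j:ℤ) - 1)) q
        (Λ k i - Λ (k-1) i))

abbrev Fqt := FractionRing (MvPolynomial (Fin 2) ℚ)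

def qv : Fqt := algebraMap (MvPolynomial (Fin 2) ℚ) Fqt (MvPolynomial.X 0)
def tv : Fqt := algebraMap (MvPolynomial (Fin 2) ℚ) Fqt (MvPolynomial.X 1)

/-- the specialization `z_i = 𝔱^{N-i} q^{λ_i}`. -/
def zspec (N : ℕ) (lam : ℕ → ℕ) : ℕ → Fqt := fun i => tv ^ (N - i) * qv ^ (lam i)

lemma qPoch_ne_zero {K : Type*} [CommRing K] [IsDomain K] {a q : K} {n : ℕ}
    (h : ∀ m < n, a * q ^ m ≠ 1) : qPoch a q n ≠ 0 :=
  prod_ne_zero_iff.2 fun m hm => sub_ne_zero.2 (h m (mem_range.1 hm)).symm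

lemma sum_Icc_sub_pred {G : Type*} [AddCommGroup G] (g : ℕ → G) {k N : ℕ} (h : k ≤ N) :
    ∑ a ∈ Icc (k + 1) N, (g a - g (a - 1)) = g N - g k := by
  rw [← Ico_add_one_right_eq_Icc, ← sum_Ico_add' (fun a => g a - g (a - 1)) k N 1]
  simpa using sum_Ico_sub g h

lemma qv_ne_zero : qv ≠ 0 := by
  simp [qv, MvPolynomial.X_ne_zero]

lemma tv_ne_zero : tv ≠ 0 := by
  simp [tv, MvPolynomial.X_ne_zero]

lemma qv_pow_mul_tv_pow_inj {m n m' n' : ℕ} (h : qv ^ m * tv ^ n = qv ^ m' * tv ^ n') :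
    m = m' ∧ n = n' := by
  have hX : (MvPolynomial.X 0 : MvPolynomial (Fin 2) ℚ) ^ m * MvPolynomial.X 1 ^ n
      = MvPolynomial.X 0 ^ m' * MvPolynomial.X 1 ^ n' :=
    IsFractionRing.injective (MvPolynomial (Fin 2) ℚ) Fqt (by simpa [qv, tv] using h)
  constructor
  · simpa using congrArg (MvPolynomial.eval ![2, 1]) hX
  · simpa using congrArg (MvPolynomial.eval ![1, 2]) hX

lemma qv_zpow_mul_tv_zpow_eq_one {a b : ℤ} (h : qv ^ a * tv ^ b = 1) : a = 0 ∧ b = 0 := by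
  rw [← Int.toNat_sub_toNat_neg a, ← Int.toNat_sub_toNat_neg b, zpow_sub₀ qv_ne_zero,
    zpow_sub₀ tv_ne_zero] at h
  simp only [zpow_natCast] at h
  field_simp [qv_ne_zero, tv_ne_zero] at h
  obtain ⟨ha, hb⟩ := qv_pow_mul_tv_pow_inj h
  omega

lemma qPoch_qv_zpow_mul_tv_zpow_ne_zero {a b : ℤ} {n : ℕ} (h : b ≠ 0 ∨ a + n ≤ 0) :
    qPoch (qv ^ a * tv ^ b) qv n ≠ 0 := by
  refine qPoch_ne_zero fun m hm hm1 => ?_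
  rw [mul_right_comm, ← zpow_natCast, ← zpow_add₀ qv_ne_zero] at hm1
  have := qv_zpow_mul_tv_zpow_eq_one hm1
  omega

lemma zspec_div_zspec {N : ℕ} (lam : ℕ → ℕ) {i j : ℕ} (hi : i ≤ N) (hj : j ≤ N) :
    zspec N lam j / zspec N lam i = qv ^ ((lam j : ℤ) - lam i) * tv ^ ((i : ℤ) - j) := by
  simp only [zspec, ← zpow_natCast, Nat.cast_sub hi, Nat.cast_sub hj, zpow_sub₀ qv_ne_zero,
    zpow_sub₀ tv_ne_zero]
  field_simp [qv_ne_zero, tv_ne_zero]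

namespace IsTab

variable {N : ℕ} {lam : ℕ → ℕ} {Λ : ℕ → ℕ → ℕ}

lemma thetaOf_eq (hT : IsTab N lam Λ) {i k : ℕ} (hi : 1 ≤ i) (hk : 1 ≤ k) (hkN : k ≤ N) :
    (thetaOf Λ i k : ℤ) = Λ k i - Λ (k - 1) i :=
  Nat.cast_sub (hT.2.2 k hk hkN i hi).1

lemma Sijk_eq (hT : IsTab N lam Λ) {i j k : ℕ} (hi : 1 ≤ i) (hj : 1 ≤ j) (hkN : k ≤ N) :
    Sijk N (thetaOf Λ) i j k = ((lam i : ℤ) - Λ k i) - ((lam j : ℤ) - Λ k j) := by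
  have hθ : ∀ a ∈ Icc (k + 1) N, (thetaOf Λ i a : ℤ) - thetaOf Λ j a
      = ((Λ a i : ℤ) - Λ a j) - ((Λ (a - 1) i : ℤ) - Λ (a - 1) j) := by
    intro a ha
    rw [mem_Icc] at ha
    rw [hT.thetaOf_eq hi (by omega) ha.2, hT.thetaOf_eq hj (by omega) ha.2]
    ring
  rw [Sijk, sum_congr rfl hθ, sum_Icc_sub_pred (fun a => (Λ a i : ℤ) - Λ a j) hkN,
    ← hT.2.1 i hi, ← hT.2.1 j hj]
  ring

lemma specialized_arguments (hT : IsTab N lam Λ) {i j k : ℕ} (hi : 1 ≤ i) (hij : i ≤ j)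
    (hjk : j < k) (hkN : k ≤ N) :
    qv ^ Sijk N (thetaOf Λ) i (j + 1) k * tv * zspec N lam (j + 1) / zspec N lam i
        = qv ^ (-(Λ k i : ℤ) + Λ k (j + 1)) * tv ^ ((i : ℤ) - j) ∧
      qv ^ Sijk N (thetaOf Λ) i (j + 1) k * qv * zspec N lam (j + 1) / zspec N lam i
        = qv ^ (-(Λ k i : ℤ) + Λ k (j + 1) + 1) * tv ^ ((i : ℤ) - j - 1) ∧
      qv ^ (-(thetaOf Λ j k : ℤ) + Sijk N (thetaOf Λ) i j k) * (qv / tv) * zspec N lam j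
          / zspec N lam i
        = qv ^ (-(Λ k i : ℤ) + Λ (k - 1) j + 1) * tv ^ ((i : ℤ) - j - 1) ∧
      qv ^ (-(thetaOf Λ j k : ℤ) + Sijk N (thetaOf Λ) i j k) * zspec N lam j / zspec N lam i
        = qv ^ (-(Λ k i : ℤ) + Λ (k - 1) j) * tv ^ ((i : ℤ) - j) := by
  simp only [mul_div_assoc, zspec_div_zspec lam (show i ≤ N by omega) (show j + 1 ≤ N by omega),
    zspec_div_zspec lam (show i ≤ N by omega) (show j ≤ N by omega),
    hT.Sijk_eq hi (show 1 ≤ j + 1 by omega) hkN, hT.Sijk_eq hi (show 1 ≤ j by omega) hkN,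
    hT.thetaOf_eq (show 1 ≤ j by omega) (show 1 ≤ k by omega) hkN]
  push_cast
  simp only [zpow_add₀ qv_ne_zero, zpow_sub₀ qv_ne_zero, zpow_add₀ tv_ne_zero,
    zpow_sub₀ tv_ne_zero, zpow_neg, zpow_natCast, zpow_one]
  refine ⟨?_, ?_, ?_, ?_⟩ <;> field_simp [qv_ne_zero, tv_ne_zero]

end IsTab

theorem c_specializes_to_psi_general (N : ℕ) (lam : ℕ → ℕ)
    (Λ : ℕ → ℕ → ℕ) (hT : IsTab N lam Λ) :
    (∀ k ∈ Finset.Icc 2 N, ∀ i ∈ Finset.Icc 1 (k-1), ∀ j ∈ Finset.Icc i (k-1),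
      qPoch (qv ^ (Sijk N (thetaOf Λ) i (j+1) k) * qv * zspec N lam (j+1) / zspec N lam i)
          qv (thetaOf Λ i k) ≠ 0 ∧
      qPoch (qv ^ (-(thetaOf Λ j k : ℤ) + Sijk N (thetaOf Λ) i j k)
            * zspec N lam j / zspec N lam i) qv (thetaOf Λ i k) ≠ 0) ∧
    cfun N (thetaOf Λ) qv tv (zspec N lam) = psiT N Λ qv tv := by
  refine ⟨fun k hk i hi j hj => ?_, ?_⟩
  · simp only [mem_Icc] at hk hi hj
    obtain ⟨-, h₂, -, h₄⟩ := hT.specialized_arguments hi.1 hj.1 (by omega) hk.2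
    rw [h₂, h₄]
    refine ⟨qPoch_qv_zpow_mul_tv_zpow_ne_zero (by omega), ?_⟩
    rcases hj.1.eq_or_lt with rfl | hij
    · have hθ := hT.thetaOf_eq hi.1 (by omega) hk.2
      exact qPoch_qv_zpow_mul_tv_zpow_ne_zero (by omega)
    · exact qPoch_qv_zpow_mul_tv_zpow_ne_zero (by omega)
  · rw [cfun, psiT, ← prod_subset (Icc_subset_Icc one_le_two le_rfl)]
    · refine prod_congr rfl fun k hk => prod_congr rfl fun i hi => prod_congr rfl fun j hj => ?_
      simp only [mem_Icc] at hk hi hj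
      obtain ⟨h₁, h₂, h₃, h₄⟩ := hT.specialized_arguments hi.1 hj.1 (by omega) hk.2
      rw [h₁, h₂, h₃, h₄]
      exact mul_comm _ _
    · intro k hk hk2
      obtain rfl : k = 1 := by simp only [mem_Icc] at hk hk2; omega
      simp

theorem c_specializes_to_psi (N : ℕ) (lam : ℕ → ℕ)
    (hpart : ∀ i, 1 ≤ i → lam (i+1) ≤ lam i) (hsupp : ∀ i, N < i → lam i = 0)
    (Λ : ℕ → ℕ → ℕ) (hT : IsTab N lam Λ) :
    (∀ k ∈ Finset.Icc 2 N, ∀ i ∈ Finset.Icc 1 (k-1), ∀ j ∈ Finset.Icc i (k-1),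
      qPoch (qv ^ (Sijk N (thetaOf Λ) i (j+1) k) * qv * zspec N lam (j+1) / zspec N lam i)
          qv (thetaOf Λ i k) ≠ 0 ∧
      qPoch (qv ^ (-(thetaOf Λ j k : ℤ) + Sijk N (thetaOf Λ) i j k)
            * zspec N lam j / zspec N lam i) qv (thetaOf Λ i k) ≠ 0) ∧
    cfun N (thetaOf Λ) qv tv (zspec N lam) = psiT N Λ qv tv :=
  c_specializes_to_psi_general N lam Λ hT
end
end

section
/- Let 𝔽 = ℚ(q,𝔱) be the field of rational functions in two indeterminates q and 𝔱, and let u ∈ 𝔽[z_1,…,z_N] be a polynomial in N variables. If u(𝔱^{N−1}q^{λ_1}, 𝔱^{N−2}q^{λ_2}, …, 𝔱^{N−i}q^{λ_i}, …, q^{λ_N}) = 0 for every partition λ = (λ_1 ≥ λ_2 ≥ ⋯ ≥ λ_N ≥ 0) of nonnegative integers, then u = 0. -/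
/-!
Variables of `𝔽`:  `X 0 = q`, `X 1 = 𝔱`.  The variable `z_i` (1 ≤ i ≤ N) is
`MvPolynomial.X i'` for `i' : Fin N` with `i = i'.val + 1`.

Let `d` exceed the total degree of `u`. Give the `i`-th coordinate the block of `d` exponents
`[(N-1-i)d, (N-i)d)`; these blocks are disjoint and decrease with `i`, so every point of the
resulting product grid is a partition specialization. Each side of the grid has `d` points, more
than the degree of `u` in any variable, so the Combinatorial Nullstellensatz forces `u = 0`.
-/

noncomputable section
open Finset

lemma antitone_of_mem_Ico_blocks {n d : ℕ} {k : Fin n → ℕ}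
    (hk : ∀ i : Fin n, k i ∈ Ico ((n - 1 - i) * d) ((n - i) * d)) : Antitone k := by
  intro i j hij
  rcases hij.lt_or_eq with hlt | rfl
  · have hblock : (n - j) * d ≤ (n - 1 - i) * d := Nat.mul_le_mul_right d (by omega)
    exact ((mem_Ico.mp (hk j)).2.trans_le hblock).le.trans (mem_Ico.mp (hk i)).1
  · exact le_rfl

namespace MvPolynomial

theorem eq_zero_of_eval_zero_at_antitone {R : Type*} [CommRing R] [IsDomain R] {n : ℕ}
    (P : MvPolynomial (Fin n) R) (f : Fin n → ℕ → R) (hf : ∀ i, Function.Injective (f i))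
    (h : ∀ k : Fin n → ℕ, Antitone k → eval (fun i => f i (k i)) P = 0) : P = 0 := by
  classical
  set d := P.totalDegree + 1
  let S : Fin n → Finset R := fun i => (Ico ((n - 1 - i) * d) ((n - i) * d)).image (f i)
  refine eq_zero_of_eval_zero_at_prod_finset P S (fun i => ?_) (fun x hx => ?_)
  · have hcard : #(S i) = d := by
      rw [card_image_of_injective _ (hf i), Nat.card_Ico, ← Nat.sub_mul]
      have : n - i - (n - 1 - i) = 1 := by omega
      rw [this, one_mul]
    rw [hcard]
    exact Nat.lt_succ_of_le (degreeOf_le_totalDegree P i)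
  · choose k hk hfk using fun i => mem_image.mp (hx i)
    obtain rfl : (fun i => f i (k i)) = x := _root_.funext hfk
    exact h k (antitone_of_mem_Ico_blocks hk)

end MvPolynomial

lemma injective_algebraMap_fqt :
    Function.Injective (algebraMap (MvPolynomial (Fin 2) ℚ) Fqt) :=
  IsFractionRing.injective _ _

lemma qv_pow_injective : Function.Injective fun n : ℕ => qv ^ n := by
  intro a b hab
  have hX : (MvPolynomial.X 0 : MvPolynomial (Fin 2) ℚ) ^ a = MvPolynomial.X 0 ^ b :=
    injective_algebraMap_fqt (by simpa only [qv, map_pow] using hab)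
  simpa only [MvPolynomial.totalDegree_X_pow] using congrArg MvPolynomial.totalDegree hX

theorem vanishing_at_all_partition_specializations_implies_zero
    (N : ℕ) (u : MvPolynomial (Fin N) Fqt)
    (h : ∀ lam : Fin N → ℕ, (∀ i j : Fin N, i ≤ j → lam j ≤ lam i) →
      MvPolynomial.eval (fun i : Fin N => tv ^ (N - 1 - (i : ℕ)) * qv ^ (lam i)) u = 0) :
    u = 0 :=
  MvPolynomial.eq_zero_of_eval_zero_at_antitone u (fun i k => tv ^ (N - 1 - (i : ℕ)) * qv ^ k)
    (fun _ => (mul_right_injective₀ (pow_ne_zero _ tv_ne_zero)).comp qv_pow_injective)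
    fun lam hlam => h lam fun _ _ hij => hlam hij
end
end

section
/- Let N ≥ 2. Identify the positive roots of sl_N with the pairs (a,b), 1 ≤ a < b ≤ N, set |α_{a,b}| := b − a, and call α_{a,b} simple iff b = a+1. For i ≥ 0 let F_i be the number of pairs (A,B) of finite multisets of positive roots of sl_N such that no element of A is simple and Σ_{α∈A}(|α|−1) + Σ_{β∈B}(|β|+1) = i. Then in the formal power series ring ℚ[[t]]: (Σ_{i≥0} F_i t^i) · ∏_{k=2}^{N}(1 + t + ⋯ + t^{k−1}) = ∏_{k=2}^{N}(1 + t + ⋯ + t^{k−1}) · [∏_{m=2}^{N−1}(1 − t^m)^{2(N−m)}]^{−1} · (1 − t^N)^{−1} · (1 − t)^{−(N−2)}. (The left-hand side is the stable Poincaré polynomial H_0(t) = lim_α Σ_i t^i dim H^{2i}(𝒬^α,ℂ) of the Laumon quasiflag spaces, the product ∏_{k=2}^{N}(1+⋯+t^{k−1}) being the Poincaré polynomial of the flag variety of SL(N).) -/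
/-!
STATEMENT 12: the stable Poincaré series of the Laumon quasiflag spaces.  The
positive roots of `sl_N` are encoded as pairs `(a,b)` with `1 ≤ a < b ≤ N`,
`|α_{a,b}| = b − a`, and `α_{a,b}` is simple iff `b = a + 1`.  `F_i` counts pairs
`(A,B)` of multisets of positive roots with no simple root in `A` and
`Σ_{α∈A}(|α|−1) + Σ_{β∈B}(|β|+1) = i`.  The claimed identity holds in `ℚ[[t]]`.
-/

noncomputable section
open Finset PowerSeries

/-- positive roots of `sl_N` as pairs `1 ≤ a < b ≤ N`. -/
def PRoot (N : ℕ) := {p : ℕ × ℕ // 1 ≤ p.1 ∧ p.1 < p.2 ∧ p.2 ≤ N}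

/-- `F_i`: the number of pairs `(A, B)` of multisets of positive roots such that
no element of `A` is simple and `Σ_{α∈A}(|α|−1) + Σ_{β∈B}(|β|+1) = i`. -/
def Fcount (N i : ℕ) : ℕ :=
  Set.ncard {AB : Multiset (PRoot N) × Multiset (PRoot N) |
    (∀ α ∈ AB.1, α.1.2 ≠ α.1.1 + 1) ∧
    (AB.1.map fun α => α.1.2 - α.1.1 - 1).sum
      + (AB.2.map fun β => β.1.2 - β.1.1 + 1).sum = i}

/-!
A pair `(A, B)` is one multiset on two copies of the positive roots, weighted by `|α| - 1` on
the copy of the non-simple roots and by `|β| + 1` on the copy of all roots. Multisets over a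
finite set of positively weighted elements are counted by `∏ (1 - t ^ w)⁻¹`, so `∑ F_i t^i` is
the inverse of `∏_j (1 - t^j)^{e_j}`, where `e_j` counts the elements of weight `j`. Since there
are `N - m` roots of height `m`, `e_j = (N - j - 1) + (N - j + 1) = 2 (N - j)` for
`2 ≤ j ≤ N - 1`, while `e_1 = N - 2` and `e_N = 1`.
-/

namespace PowerSeries

variable {K : Type*} [Field K]

theorem inv_one_sub_X_pow {k : ℕ} (hk : k ≠ 0) :
    (1 - X ^ k : K⟦X⟧)⁻¹ = mk fun n => if k ∣ n then 1 else 0 := by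
  rw [PowerSeries.inv_eq_iff_mul_eq_one (by simp [zero_pow hk])]
  have h := congrArg (expand k hk) (mk_one_mul_one_sub_eq_one K)
  rw [map_mul, map_sub, map_one, expand_X] at h
  convert h using 2
  ext n
  simp [coeff_expand]

theorem inv_prod {ι : Type*} (s : Finset ι) (f : ι → K⟦X⟧) :
    (∏ i ∈ s, f i)⁻¹ = ∏ i ∈ s, (f i)⁻¹ := by
  classical
  induction s using Finset.induction_on with
  | empty => simp
  | insert a s ha ih => rw [prod_insert ha, prod_insert ha, PowerSeries.mul_inv_rev, ih, mul_comm]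

end PowerSeries

theorem Finset.prod_comp_eq_prod_pow_card_fiber {ι κ M : Type*} [CommMonoid M] [DecidableEq κ]
    {s : Finset ι} {t : Finset κ} {g : ι → κ} (h : ∀ a ∈ s, g a ∈ t) (f : κ → M) :
    ∏ a ∈ s, f (g a) = ∏ b ∈ t, f b ^ #{a ∈ s | g a = b} := by
  simp_rw [← prod_const, prod_fiberwise_of_maps_to' h]

namespace Multiset

variable {α β : Type*}

def disjSumEquiv : Multiset α × Multiset β ≃ Multiset (α ⊕ β) where
  toFun p := p.1.disjSum p.2
  invFun m := (m.filterMap Sum.getLeft?, m.filterMap Sum.getRight?)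
  left_inv := by
    rintro ⟨s, t⟩
    simp [disjSum, filterMap_map, Function.comp_def, eq_zero_iff_forall_notMem]
  right_inv m := by
    simp only [disjSum]
    induction m using Multiset.induction_on with
    | empty => simp
    | cons x m ih =>
      rcases x with a | b
      · rw [filterMap_cons_some Sum.getLeft? _ _ rfl,
          filterMap_cons_none (f := Sum.getRight?) _ _ rfl, map_cons, cons_add, ih]
      · rw [filterMap_cons_none (f := Sum.getLeft?) _ _ rfl,
          filterMap_cons_some Sum.getRight? _ _ rfl, map_cons, add_cons, ih]

end Multiset

section WeightedMultisets

variable {σ : Type*} {s : Finset σ}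

theorem Multiset.sum_map_eq_sum_count_mul [DecidableEq σ] {m : Multiset σ} (hm : ∀ x ∈ m, x ∈ s)
    (w : σ → ℕ) : (m.map w).sum = ∑ x ∈ s, m.count x * w x := by
  rw [Finset.sum_multiset_map_count]
  refine Finset.sum_subset (fun x hx => hm x (Multiset.mem_toFinset.mp hx)) fun x _ hx => ?_
  rw [Multiset.count_eq_zero_of_notMem (by simpa using hx), zero_smul]

theorem Multiset.count_sum_replicate [DecidableEq σ] (c : σ → ℕ) (y : σ) :
    (∑ x ∈ s, Multiset.replicate (c x) x).count y = if y ∈ s then c y else 0 := by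
  simp [Multiset.count_sum', Multiset.count_replicate]

theorem Multiset.ncard_weighted_eq_card_finsuppAntidiag [DecidableEq σ] {w : σ → ℕ}
    (hw : ∀ x ∈ s, w x ≠ 0) (i : ℕ) :
    {m : Multiset σ | (∀ x ∈ m, x ∈ s) ∧ (m.map w).sum = i}.ncard
      = #{l ∈ s.finsuppAntidiag i | ∀ x ∈ s, w x ∣ l x} := by
  rw [← Set.ncard_coe_finset]
  symm
  refine Set.BijOn.ncard_eq (f := fun l => ∑ x ∈ s, Multiset.replicate (l x / w x) x)
    (Set.InvOn.bijOn (f' := fun m => Finsupp.onFinset m.toFinset (fun x => w x * m.count x)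
      fun x hx => Multiset.mem_toFinset.mpr (Multiset.count_ne_zero.mp (right_ne_zero_of_mul hx)))
      ⟨fun l hl => ?_, fun m hm => ?_⟩ (fun l hl => ?_) (fun m hm => ?_))
  · simp only [Finset.coe_filter, Finset.mem_finsuppAntidiag, Set.mem_ofPred_eq] at hl
    ext y
    rw [Finsupp.onFinset_apply, Multiset.count_sum_replicate]
    split_ifs with hy
    · exact Nat.mul_div_cancel' (hl.2 y hy)
    · rw [mul_zero, Finsupp.notMem_support_iff.mp fun h => hy (hl.1.2 h)]
  · simp only [Set.mem_ofPred_eq] at hm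
    ext y
    rw [Multiset.count_sum_replicate, Finsupp.onFinset_apply]
    split_ifs with hy
    · exact Nat.mul_div_cancel_left _ (Nat.pos_of_ne_zero (hw y hy))
    · exact (Multiset.count_eq_zero_of_notMem fun h => hy (hm.1 y h)).symm
  · simp only [Finset.coe_filter, Finset.mem_finsuppAntidiag, Set.mem_ofPred_eq] at hl
    have hsupp : ∀ x ∈ ∑ x ∈ s, Multiset.replicate (l x / w x) x, x ∈ s := by
      intro x hx
      obtain ⟨y, hy, hxy⟩ := Multiset.mem_sum.mp hx
      rwa [Multiset.eq_of_mem_replicate hxy]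
    refine ⟨hsupp, ?_⟩
    rw [Multiset.sum_map_eq_sum_count_mul hsupp, ← hl.1.1]
    refine Finset.sum_congr rfl fun x hx => ?_
    rw [Multiset.count_sum_replicate, if_pos hx, Nat.div_mul_cancel (hl.2 x hx)]
  · simp only [Set.mem_ofPred_eq] at hm
    simp only [Finset.coe_filter, Finset.mem_finsuppAntidiag, Set.mem_ofPred_eq]
    refine ⟨⟨?_, ?_⟩, fun x _ => ?_⟩
    · rw [← hm.2, Multiset.sum_map_eq_sum_count_mul hm.1]
      exact Finset.sum_congr rfl fun x _ => mul_comm _ _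
    · exact Finsupp.support_onFinset_subset.trans fun x hx =>
        hm.1 x (Multiset.mem_toFinset.mp hx)
    · exact Dvd.intro _ rfl

theorem PowerSeries.coeff_prod_inv_one_sub_X_pow_eq_ncard {K : Type*} [Field K] {w : σ → ℕ}
    (hw : ∀ x ∈ s, w x ≠ 0) (i : ℕ) : coeff i (∏ x ∈ s, (1 - X ^ w x : K⟦X⟧)⁻¹)
      = {m : Multiset σ | (∀ x ∈ m, x ∈ s) ∧ (m.map w).sum = i}.ncard := by
  classical
  rw [Multiset.ncard_weighted_eq_card_finsuppAntidiag hw, Finset.prod_congr rfl fun x hx =>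
    PowerSeries.inv_one_sub_X_pow (K := K) (hw x hx), coeff_prod]
  simp only [coeff_mk, Finset.prod_boole, Finset.sum_boole]

end WeightedMultisets

namespace PRoot

variable {N : ℕ}

instance : Fintype (PRoot N) :=
  Fintype.subtype {p ∈ Icc 1 N ×ˢ Icc 1 N | p.1 < p.2} fun p => by
    simp only [mem_filter, mem_product, mem_Icc]
    omega

def height (α : PRoot N) : ℕ := α.1.2 - α.1.1

theorem height_pos (α : PRoot N) : 0 < α.height := by
  have := α.2
  unfold height
  omega

theorem height_lt (α : PRoot N) : α.height < N := by
  have := α.2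
  unfold height
  omega

theorem card_height_eq {m : ℕ} (hm : m ≠ 0) : #{α : PRoot N | α.height = m} = N - m := by
  calc #{α : PRoot N | α.height = m} = #(Icc 1 (N - m)) := by
        refine Finset.card_bij' (fun α _ => α.1.1)
          (fun a ha => ⟨(a, a + m), by simp only [mem_Icc] at ha; omega⟩) ?_ ?_ ?_ ?_
        · intro α hα
          have := α.2
          have hα : α.1.2 - α.1.1 = m := (mem_filter_univ α).mp hα
          rw [mem_Icc]
          omega
        · intro a ha
          exact (mem_filter_univ _).mpr (show a + m - a = m by omega)
        · intro α hα
          have := α.2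
          have hα : α.1.2 - α.1.1 = m := (mem_filter_univ α).mp hα
          refine Subtype.ext (Prod.ext rfl ?_)
          dsimp only
          omega
        · intro a ha
          rfl
    _ = N - m := by simp

def nonsimple (N : ℕ) : Finset (PRoot N) := {α | α.1.2 ≠ α.1.1 + 1}

theorem mem_nonsimple {α : PRoot N} : α ∈ nonsimple N ↔ 2 ≤ α.height := by
  have := α.2
  rw [nonsimple, mem_filter_univ, height]
  omega

def pairWeight : PRoot N ⊕ PRoot N → ℕ :=
  Sum.elim (fun α => α.height - 1) (fun β => β.height + 1)

theorem pairWeight_ne_zero : ∀ ρ ∈ (nonsimple N).disjSum univ, pairWeight ρ ≠ 0 := by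
  rintro (α | β) hρ
  · have := mem_nonsimple.mp (inl_mem_disjSum.mp hρ)
    simp only [pairWeight, Sum.elim_inl]
    omega
  · simp [pairWeight]

theorem fcount_eq_ncard (i : ℕ) :
    Fcount N i = {m : Multiset (PRoot N ⊕ PRoot N) |
      (∀ ρ ∈ m, ρ ∈ (nonsimple N).disjSum univ) ∧ (m.map pairWeight).sum = i}.ncard := by
  rw [Fcount, ← Set.ncard_image_of_injective _ Multiset.disjSumEquiv.injective]
  congr 1
  ext m
  obtain ⟨⟨A, B⟩, rfl⟩ := Multiset.disjSumEquiv.surjective m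
  rw [Multiset.disjSumEquiv.injective.mem_set_image]
  simp [Multiset.disjSumEquiv, Multiset.mem_disjSum, Multiset.map_disjSum, nonsimple, pairWeight,
    height]

theorem mk_fcount_eq_prod {K : Type*} [Field K] :
    (mk fun i => (Fcount N i : K))
      = ∏ ρ ∈ (nonsimple N).disjSum univ, (1 - X ^ pairWeight ρ : K⟦X⟧)⁻¹ := by
  ext i
  rw [coeff_mk, fcount_eq_ncard, coeff_prod_inv_one_sub_X_pow_eq_ncard pairWeight_ne_zero]

theorem card_nonsimple_height_sub_one_eq {j : ℕ} (hj : j ≠ 0) :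
    #{α ∈ nonsimple N | α.height - 1 = j} = N - (j + 1) := by
  rw [← card_height_eq (N := N) (Nat.succ_ne_zero j)]
  congr 1
  ext α
  simp only [mem_filter, mem_univ, true_and, mem_nonsimple]
  omega

theorem card_height_add_one_eq {j : ℕ} (hj : 2 ≤ j) :
    #{α : PRoot N | α.height + 1 = j} = N - (j - 1) := by
  rw [← card_height_eq (N := N) (by omega : j - 1 ≠ 0)]
  congr 1
  exact filter_congr fun α _ => by omega

theorem card_height_add_one_eq_one : #{α : PRoot N | α.height + 1 = 1} = 0 :=
  card_eq_zero.mpr <| filter_eq_empty_iff.mpr fun α _ => by have := α.height_pos; omega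

theorem prod_pairWeight {M : Type*} [CommMonoid M] (x : ℕ → M) (hN : 2 ≤ N) :
    ∏ ρ ∈ (nonsimple N).disjSum univ, x (pairWeight ρ)
      = x 1 ^ (N - 2) * (∏ m ∈ Icc 2 (N - 1), x m ^ (2 * (N - m))) * x N := by
  have hA : ∀ α ∈ nonsimple N, α.height - 1 ∈ Icc 1 N := fun α hα => by
    have := α.height_lt
    have := mem_nonsimple.mp hα
    rw [mem_Icc]
    omega
  have hB : ∀ β ∈ (univ : Finset (PRoot N)), β.height + 1 ∈ Icc 1 N := fun β _ => by
    have := β.height_lt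
    rw [mem_Icc]
    omega
  have hsplit : Icc 1 N = insert 1 (insert N (Icc 2 (N - 1))) := by
    ext j
    simp only [mem_insert, mem_Icc]
    omega
  have hmid : ∀ m ∈ Icc 2 (N - 1),
      x m ^ #{α ∈ nonsimple N | α.height - 1 = m} * x m ^ #{α : PRoot N | α.height + 1 = m}
        = x m ^ (2 * (N - m)) := fun m hm => by
    rw [mem_Icc] at hm
    rw [card_nonsimple_height_sub_one_eq (by omega), card_height_add_one_eq hm.1, ← pow_add]
    congr 1
    omega
  rw [prod_disjSum]
  simp only [pairWeight, Sum.elim_inl, Sum.elim_inr]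
  rw [prod_comp_eq_prod_pow_card_fiber hA, prod_comp_eq_prod_pow_card_fiber hB,
    ← prod_mul_distrib, hsplit, prod_insert (by simp; omega), prod_insert (by simp; omega),
    card_nonsimple_height_sub_one_eq one_ne_zero, card_height_add_one_eq_one,
    card_nonsimple_height_sub_one_eq (by omega), card_height_add_one_eq hN,
    prod_congr rfl hmid, Nat.sub_eq_zero_of_le (Nat.le_succ N), show N - (N - 1) = 1 by omega]
  simp only [pow_zero, pow_one, mul_one, one_mul]
  ac_rfl

end PRoot

theorem stable_poincare_series_of_laumon_spaces (N : ℕ) (hN : 2 ≤ N) :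
    (PowerSeries.mk fun i => (Fcount N i : ℚ)) *
      (∏ k ∈ Finset.Icc 2 N, ∑ j ∈ Finset.range k, (PowerSeries.X : PowerSeries ℚ) ^ j)
    = (∏ k ∈ Finset.Icc 2 N, ∑ j ∈ Finset.range k, (PowerSeries.X : PowerSeries ℚ) ^ j) *
      (∏ m ∈ Finset.Icc 2 (N-1), (1 - (PowerSeries.X : PowerSeries ℚ) ^ m) ^ (2*(N-m)))⁻¹ *
      (1 - (PowerSeries.X : PowerSeries ℚ) ^ N)⁻¹ *
      ((1 - (PowerSeries.X : PowerSeries ℚ)) ^ (N-2))⁻¹ := by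
  rw [PRoot.mk_fcount_eq_prod, ← PowerSeries.inv_prod,
    PRoot.prod_pairWeight (fun j => (1 - X ^ j : ℚ⟦X⟧)) hN, pow_one,
    PowerSeries.mul_inv_rev, PowerSeries.mul_inv_rev]
  ring
end
end
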